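/- Let N ≥ 2 and K ≥ 1, and let (w, P) be a configuration with confidence e. If f : ℝ → ℝ is concave on the interval [0,1], then the f-impurity satisfies I ≤ f(e) + (N−1)·f((1−e)/(N−1)). (Paper's Theorem 1, the upper bound u(e) on the impurity.) -/

import Mathlib

/-!
Fix a row `P k` and any entry `P k j`. Jensen's inequality applied to the other `N - 1` entries,
whose average is `(1 - P k j) / (N - 1)`, bounds the row's impurity by `u (P k j)`, where
`u e = f e + (N - 1) f ((1 - e) / (N - 1))` is `maxImpurity f (N - 1)`. The map `u` is again
concave on `[0, 1]`, so Jensen's inequality with the weights `w` gives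
`∑ₖ w k · u (P k jₖ) ≤ u (∑ₖ w k · P k jₖ)`; choosing `jₖ` to be the position of the row
maximum makes the right-hand side `u e`.
-/

open Finset

/-- The maximum of a real-valued vector over the finite index set `Fin N` (`N > 0`). -/
noncomputable def colMax {N : ℕ} (hN : 0 < N) (v : Fin N → ℝ) : ℝ :=
  Finset.univ.sup' (Finset.univ_nonempty_iff.mpr ⟨⟨0, hN⟩⟩) v

/-- The impurity of the distribution `(e, (1 - e) / c, …, (1 - e) / c)` with `c + 1` classes. -/
noncomputable def maxImpurity (f : ℝ → ℝ) (c e : ℝ) : ℝ :=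
  f e + c * f ((1 - e) / c)

theorem ConcaveOn.sum_le_card_mul_map_average {ι E : Type*} [AddCommGroup E] [Module ℝ E]
    {s : Set E} {f : E → ℝ} (hf : ConcaveOn ℝ s f) (t : Finset ι) {x : ι → E}
    (hx : ∀ i ∈ t, x i ∈ s) :
    ∑ i ∈ t, f (x i) ≤ #t * f ((#t : ℝ)⁻¹ • ∑ i ∈ t, x i) := by
  rcases t.eq_empty_or_nonempty with rfl | ht
  · simp
  have hcard : (0 : ℝ) < #t := by exact_mod_cast ht.card_pos
  have hjensen := hf.le_map_sum (w := fun _ => (#t : ℝ)⁻¹) (fun _ _ => by positivity)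
    (by simp [hcard.ne']) hx
  rw [← smul_sum, ← smul_sum, smul_eq_mul] at hjensen
  rwa [← inv_mul_le_iff₀ hcard]

theorem mem_Icc_of_sum_eq_one {ι : Type*} [Fintype ι] {p : ι → ℝ} (hp : ∀ i, 0 ≤ p i)
    (hps : ∑ i, p i = 1) (i : ι) : p i ∈ Set.Icc (0 : ℝ) 1 :=
  ⟨hp i, hps ▸ single_le_sum (fun j _ => hp j) (mem_univ i)⟩

theorem ConcaveOn.sum_map_le_maxImpurity {ι : Type*} [Fintype ι] [DecidableEq ι] {f : ℝ → ℝ}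
    (hf : ConcaveOn ℝ (Set.Icc 0 1) f) {p : ι → ℝ} (hp : ∀ i, 0 ≤ p i) (hps : ∑ i, p i = 1)
    (j : ι) : ∑ i, f (p i) ≤ maxImpurity f (Fintype.card ι - 1) (p j) := by
  have hcard : (#(univ.erase j) : ℝ) = Fintype.card ι - 1 := by
    rw [card_erase_of_mem (mem_univ j), card_univ,
      Nat.cast_sub (Fintype.card_pos_iff.2 ⟨j⟩), Nat.cast_one]
  have hrest : ∑ i ∈ univ.erase j, p i = 1 - p j := by
    rw [← hps, ← add_sum_erase _ _ (mem_univ j), add_sub_cancel_left]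
  have hjensen := hf.sum_le_card_mul_map_average (univ.erase j)
    (fun i _ => mem_Icc_of_sum_eq_one hp hps i)
  rw [hcard, hrest, smul_eq_mul, inv_mul_eq_div] at hjensen
  rw [← add_sum_erase _ _ (mem_univ j), maxImpurity]
  gcongr

theorem ConcaveOn.maxImpurity {f : ℝ → ℝ} (hf : ConcaveOn ℝ (Set.Icc 0 1) f) {c : ℝ}
    (hc : 1 ≤ c) : ConcaveOn ℝ (Set.Icc 0 1) (maxImpurity f c) := by
  have hc0 : 0 < c := by linarith
  have hrest : ConcaveOn ℝ (Set.Icc 0 1) (fun x => f ((1 - x) / c)) := by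
    have hline : ∀ x : ℝ, AffineMap.lineMap c⁻¹ 0 x = (1 - x) / c := fun x => by
      rw [AffineMap.lineMap_apply_ring']
      field_simp
      ring
    refine ((hf.comp_affineMap (AffineMap.lineMap c⁻¹ 0)).subset ?_ (convex_Icc 0 1)).congr ?_
    · rintro x ⟨hx0, hx1⟩
      simp only [Set.mem_preimage, hline, Set.mem_Icc]
      exact ⟨by positivity, by rw [div_le_one hc0]; linarith⟩
    · intro x _
      simp [hline]
  exact hf.add (hrest.smul hc0.le)

theorem exists_colMax_eq {N : ℕ} (hN : 0 < N) (v : Fin N → ℝ) : ∃ i, colMax hN v = v i := by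
  obtain ⟨i, -, hi⟩ := exists_mem_eq_sup' (univ_nonempty_iff.mpr ⟨⟨0, hN⟩⟩) v
  exact ⟨i, hi⟩

theorem impurity_upper_bound (N K : ℕ) (hN : 2 ≤ N)
    (w : Fin K → ℝ) (hw : ∀ k, 0 ≤ w k) (hws : ∑ k, w k = 1)
    (P : Fin K → Fin N → ℝ) (hP : ∀ k i, 0 ≤ P k i) (hPs : ∀ k, ∑ i, P k i = 1)
    (f : ℝ → ℝ) (hf : ConcaveOn ℝ (Set.Icc (0 : ℝ) 1) f)
    (e : ℝ) (he : e = ∑ k, w k * colMax (by omega) (P k)) :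
    ∑ k, ∑ i, w k * f (P k i) ≤ f e + ((N : ℝ) - 1) * f ((1 - e) / ((N : ℝ) - 1)) := by
  have hN1 : (1 : ℝ) ≤ N - 1 := by
    have : (2 : ℝ) ≤ N := by exact_mod_cast hN
    linarith
  choose top htop using fun k => exists_colMax_eq (by omega) (P k)
  have hrow (k : Fin K) : ∑ i, f (P k i) ≤ maxImpurity f (N - 1) (P k (top k)) := by
    simpa using hf.sum_map_le_maxImpurity (hP k) (hPs k) (top k)
  calc ∑ k, ∑ i, w k * f (P k i) = ∑ k, w k * ∑ i, f (P k i) := by simp_rw [mul_sum]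
    _ ≤ ∑ k, w k * maxImpurity f (N - 1) (P k (top k)) := by
      gcongr with k
      exacts [hw k, hrow k]
    _ ≤ maxImpurity f (N - 1) (∑ k, w k * P k (top k)) :=
      (hf.maxImpurity hN1).le_map_sum (fun k _ => hw k) hws
        (fun k _ => mem_Icc_of_sum_eq_one (hP k) (hPs k) (top k))
    _ = f e + ((N : ℝ) - 1) * f ((1 - e) / ((N : ℝ) - 1)) := by
      simp only [he, htop, maxImpurity]
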